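/- Let 1 < p < ∞ and 1 < r ≤ 2, and set Φ(t) := t^{p'r} and Φ₀(t) := t^{p'(r+1)/2} with p' = p/(p−1). Then there is a constant C depending only on p such that [Φ̄₀]_{B_p} ≤ C·[Φ̄]_{B_p}, where Φ̄ and Φ̄₀ are the complementary Young functions of Φ and Φ₀. -/

import Mathlib

/-!
The conjugate of `t ↦ t ^ α` is explicit, `(α - 1) (t / α) ^ α'`, so
`[conj (t ^ α)]_{B_p} = (α - 1) α ^ (-α') 2 ^ (p - α') / (p - α')`, finite exactly when `α > p'`.
The identity `(p - α') (α - 1) = (p - 1) (α - p')` shows that, uniformly for `p' < α ≤ 2 p'`,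
this constant is comparable to `1 / (α - p')`. For `α = p' r` and `α = p' (r + 1) / 2` the
distances to `p'` are `p' (r - 1)` and `p' (r - 1) / 2`, which differ by the factor `2`.
-/

noncomputable section
open Set ENNReal MeasureTheory

/-- The complementary (conjugate) Young function: `φ̄(t) = sup_{s > 0} (s*t - φ(s))`. -/
def conjYoung (Φ : ℝ → ℝ) (t : ℝ) : ℝ :=
  sSup {u : ℝ | ∃ s : ℝ, 0 < s ∧ u = s * t - Φ s}

/-- `[φ]_{B_q} = ∫_{1/2}^∞ φ(t) t^{-q-1} dt`, as an extended nonnegative real. -/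
def bpConst (q : ℝ) (Φ : ℝ → ℝ) : ℝ≥0∞ :=
  ∫⁻ t in Set.Ioi ((1 : ℝ) / 2), ENNReal.ofReal (Φ t / t ^ (q + 1))

lemma conjYoung_rpow {α q t : ℝ} (hαq : α.HolderConjugate q) (ht : 0 < t) :
    conjYoung (fun s => s ^ α) t = (α - 1) * (t / α) ^ q := by
  have hα := hαq.pos
  have htα : 0 < t / α := div_pos ht hα
  refine IsGreatest.csSup_eq ⟨⟨(t / α) ^ (q - 1), by positivity, ?_⟩, ?_⟩
  · -- the supremum is attained where `α s^(α-1) = t`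
    have hpow : ((t / α) ^ (q - 1)) ^ α = (t / α) ^ q := by
      rw [← Real.rpow_mul htα.le]
      congr 1
      linear_combination hαq.mul_eq_add
    have hmul : (t / α) ^ (q - 1) * t = α * (t / α) ^ q := by
      rw [Real.rpow_sub htα, Real.rpow_one]
      field_simp
    simp only [hpow, hmul]
    ring
  · rintro u ⟨s, hs, rfl⟩
    have young := Real.young_inequality_of_nonneg hs.le htα.le hαq
    rw [← hαq.div_conj_eq_sub_one]
    calc s * t - s ^ α = α * (s * (t / α) - s ^ α / α) := by field_simp
      _ ≤ α * ((t / α) ^ q / q) := by gcongr; linarith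
      _ = α / q * (t / α) ^ q := by ring

lemma bpConst_congr {p : ℝ} {Φ Ψ : ℝ → ℝ} (h : EqOn Φ Ψ (Ioi (1 / 2))) :
    bpConst p Φ = bpConst p Ψ :=
  setLIntegral_congr_fun measurableSet_Ioi fun t ht => by rw [h ht]

lemma bpConst_const_mul_rpow {p a c : ℝ} (hc : 0 ≤ c) (hap : a < p) :
    bpConst p (fun t => c * t ^ a) = ENNReal.ofReal (c * 2 ^ (p - a) / (p - a)) := by
  have hexp : a - p - 1 < -1 := by linarith
  have hpos : ∀ t ∈ Ioi (1 / 2 : ℝ), 0 < t := fun t ht => lt_trans (by norm_num) ht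
  calc bpConst p (fun t => c * t ^ a)
      = ∫⁻ t in Ioi (1 / 2 : ℝ), ENNReal.ofReal (c * t ^ (a - p - 1)) := by
        refine setLIntegral_congr_fun measurableSet_Ioi fun t ht => ?_
        rw [sub_sub, Real.rpow_sub (hpos t ht), mul_div_assoc]
    _ = ENNReal.ofReal (∫ t in Ioi (1 / 2 : ℝ), c * t ^ (a - p - 1)) := by
        refine (ofReal_integral_eq_lintegral_ofReal ?_ ?_).symm
        · exact (integrableOn_Ioi_rpow_of_lt hexp (by norm_num)).const_mul c
        · filter_upwards [ae_restrict_mem measurableSet_Ioi] with t ht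
          exact mul_nonneg hc (Real.rpow_nonneg (hpos t ht).le _)
    _ = ENNReal.ofReal (c * 2 ^ (p - a) / (p - a)) := by
        rw [integral_const_mul, integral_Ioi_rpow_of_lt hexp (by norm_num),
          show a - p - 1 + 1 = -(p - a) by ring, Real.rpow_neg (by norm_num),
          one_div, Real.inv_rpow (by norm_num), inv_inv]
        congr 1
        field_simp

lemma Real.HolderConjugate.sub_mul_sub_one {p P α q : ℝ} (hpP : p.HolderConjugate P)
    (hαq : α.HolderConjugate q) : (p - q) * (α - 1) = (p - 1) * (α - P) := by
  linear_combination hpP.sub_one_mul_conj - hαq.sub_one_mul_conj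

lemma Real.HolderConjugate.lt_of_conj_lt {p P α q : ℝ} (hpP : p.HolderConjugate P)
    (hαq : α.HolderConjugate q) (hPα : P < α) : q < p := by
  nlinarith [hpP.sub_mul_sub_one hαq, hpP.sub_one_pos, hαq.sub_one_pos]

lemma bpConst_conjYoung_rpow {p P α q : ℝ} (hpP : p.HolderConjugate P)
    (hαq : α.HolderConjugate q) (hPα : P < α) :
    bpConst p (conjYoung (fun s => s ^ α)) =
      ENNReal.ofReal ((α - 1) / α ^ q * 2 ^ (p - q) * (α - 1) / (p - 1) / (α - P)) := by
  have hα := hαq.pos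
  have hqp := hpP.lt_of_conj_lt hαq hPα
  have hconj : EqOn (conjYoung (fun s => s ^ α)) (fun t => (α - 1) / α ^ q * t ^ q)
      (Ioi (1 / 2)) := fun t ht => by
    have ht₀ : 0 < t := lt_trans (by norm_num) ht
    rw [conjYoung_rpow hαq ht₀, Real.div_rpow ht₀.le hα.le]
    ring
  rw [bpConst_congr hconj, bpConst_const_mul_rpow (by have := hαq.sub_one_pos; positivity) hqp]
  congr 1
  field_simp [hpP.sub_one_ne_zero, (sub_pos.2 hPα).ne', (sub_pos.2 hqp).ne']
  linear_combination -(α - 1) * hpP.sub_mul_sub_one hαq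

lemma bpConst_conjYoung_rpow_le {p P α : ℝ} (hpP : p.HolderConjugate P) (hPα : P < α)
    (hα : α ≤ 2 * P) :
    bpConst p (conjYoung (fun s => s ^ α)) ≤
      ENNReal.ofReal (2 ^ p * (2 * P) / (p - 1) / (α - P)) := by
  have hα1 : 1 < α := hpP.symm.lt.trans hPα
  have hαq := Real.HolderConjugate.conjExponent hα1
  set q := α.conjExponent
  rw [bpConst_conjYoung_rpow hpP hαq hPα]
  apply ENNReal.ofReal_le_ofReal
  have hp1 := hpP.sub_one_pos
  have hq1 : 1 ≤ q := hαq.symm.lt.le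
  gcongr ?_ / _ / _
  calc (α - 1) / α ^ q * 2 ^ (p - q) * (α - 1)
      ≤ 1 * 2 ^ p * (2 * P) := by
        gcongr
        · exact div_le_one_of_le₀ ((sub_le_self α zero_le_one).trans
            (Real.self_le_rpow_of_one_le hα1.le hq1)) (by positivity)
        · norm_num
        · linarith [hαq.symm.pos]
        · linarith
    _ = 2 ^ p * (2 * P) := by ring

lemma le_bpConst_conjYoung_rpow {p P α : ℝ} (hpP : p.HolderConjugate P) (hPα : P < α)
    (hα : α ≤ 2 * P) :
    ENNReal.ofReal ((P - 1) ^ 2 / (2 * P) ^ p / (p - 1) / (α - P)) ≤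
      bpConst p (conjYoung (fun s => s ^ α)) := by
  have hα1 : 1 < α := hpP.symm.lt.trans hPα
  have hαq := Real.HolderConjugate.conjExponent hα1
  set q := α.conjExponent
  rw [bpConst_conjYoung_rpow hpP hαq hPα]
  apply ENNReal.ofReal_le_ofReal
  have hp1 := hpP.sub_one_pos
  have hP1 := hpP.symm.sub_one_pos
  have hqp := hpP.lt_of_conj_lt hαq hPα
  gcongr ?_ / _ / _
  calc (P - 1) ^ 2 / (2 * P) ^ p = (P - 1) / (2 * P) ^ p * 1 * (P - 1) := by ring
    _ ≤ (α - 1) / α ^ q * 2 ^ (p - q) * (α - 1) := by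
        gcongr
        · calc α ^ q ≤ α ^ p := Real.rpow_le_rpow_of_exponent_le hα1.le hqp.le
            _ ≤ (2 * P) ^ p := by gcongr; exact hpP.pos.le
        · exact Real.one_le_rpow one_le_two (sub_nonneg.2 hqp.le)

/-- for `1 < p < ∞`, `1 < r ≤ 2`, `Φ(t) = t^{p'r}` and
`Φ₀(t) = t^{p'(r+1)/2}`, one has `[Φ̄₀]_{B_p} ≤ C [Φ̄]_{B_p}` with `C = C(p)`. -/
theorem stmt15 (p : ℝ) (hp : 1 < p) :
    ∃ C : ℝ, 0 < C ∧ ∀ r : ℝ, 1 < r → r ≤ 2 →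
      bpConst p (conjYoung (fun t => t ^ (p / (p - 1) * ((r + 1) / 2)))) ≤
        ENNReal.ofReal C * bpConst p (conjYoung (fun t => t ^ (p / (p - 1) * r))) := by
  set P := p / (p - 1)
  have hpP : p.HolderConjugate P := .conjExponent hp
  have hp₁ := hpP.sub_one_pos
  have hP₀ := hpP.symm.pos
  have hP₁ := hpP.symm.sub_one_pos
  set U := 2 ^ p * (2 * P) / (p - 1)
  set L := (P - 1) ^ 2 / (2 * P) ^ p / (p - 1)
  have hL : 0 < L := by positivity
  refine ⟨2 * U / L, by positivity, fun r hr₁ hr₂ => ?_⟩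
  have hPr : P < P * r := lt_mul_of_one_lt_right hP₀ hr₁
  calc bpConst p (conjYoung (fun t => t ^ (P * ((r + 1) / 2))))
      ≤ ENNReal.ofReal (U / (P * ((r + 1) / 2) - P)) :=
        bpConst_conjYoung_rpow_le hpP (by nlinarith) (by nlinarith)
    _ = ENNReal.ofReal (2 * U / L) * ENNReal.ofReal (L / (P * r - P)) := by
        rw [← ENNReal.ofReal_mul (by positivity)]
        congr 1
        field_simp [(sub_pos.2 hPr).ne']
        ring
    _ ≤ ENNReal.ofReal (2 * U / L) * bpConst p (conjYoung (fun t => t ^ (P * r))) := by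
        gcongr
        exact le_bpConst_conjYoung_rpow hpP hPr (by nlinarith)
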